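/- Define f(n,k) = Σ_{j∈ℤ} (−1)^j q^{j(3j−1)/2} [n choose k−j]_q [n choose k+j]_q. Then for all n ≥ 2 and all k, f(n,k) − (1 + q − q^n) f(n−1,k) − q^{2n−2k} f(n−1,k−1) + q(1 − q^{n−1}) f(n−2,k) = 0. -/

import Mathlib

open LaurentPolynomial

/-- The Gaussian (q-)binomial coefficient `[n choose k]_q`, as a Laurent polynomial in `q`,
with the convention that it vanishes for `k < 0` or `k > n`.  Defined via the standard
Pascal-type recurrence `[n+1, k] = q^k [n, k] + [n, k-1]`. -/
noncomputable def qb : ℕ → ℤ → LaurentPolynomial ℤ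
  | 0, k => if k = 0 then 1 else 0
  | (n+1), k => T k * qb n k + qb n (k-1)

/-- The variable `q`. -/
noncomputable def q : LaurentPolynomial ℤ := T 1

/-- `f n k = Σ_{j∈ℤ} (−1)^j q^{j(3j−1)/2} [n choose k−j]_q [n choose k+j]_q`. -/
noncomputable def f (n : ℕ) (k : ℤ) : LaurentPolynomial ℤ :=
  ∑ᶠ j : ℤ, (-1 : LaurentPolynomial ℤ) ^ j.natAbs * T (j * (3 * j - 1) / 2) *
    qb n (k - j) * qb n (k + j)

/-!
The sum `f n k` is the Gaussian binomial `[n choose k]_q` itself. Expanding both factors of the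
summand of `f (n + 1) k` by the two q-Pascal rules writes `f (n + 1) k` through sums of the same
shape twisted by a power `q ^ (s * j)`. The reflection `j ↦ -j` trades the twist `s` for `1 - s`,
and when the two binomials are centred at `a` and `a - 1` the pentagonal exponent makes the
summand with twist `-1` odd under `j ↦ 1 - j`, so that sum vanishes. Comparing the two
expansions gives `(1 - q^k) f(n+1, k) = (1 - q^(n+1)) f(n, k-1)`, the absorption identity that
also characterises `[n choose k]_q`. The recurrence is then a consequence of the q-Pascal rules.
-/

lemma one_sub_T_ne_zero {a : ℤ} (ha : a ≠ 0) : (1 - T a : ℤ[T;T⁻¹]) ≠ 0 := by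
  intro h
  have h0 := congrArg (fun p : ℤ[T;T⁻¹] => p.coeff 0) (sub_eq_zero.mp h)
  simp [← T_zero, ha] at h0

lemma qb_eq_zero_of_neg (n : ℕ) {k : ℤ} (hk : k < 0) : qb n k = 0 := by
  induction n generalizing k with
  | zero => simp [qb, hk.ne]
  | succ n ih => simp [qb, ih hk, ih (show k - 1 < 0 by omega)]

lemma qb_eq_zero_of_lt (n : ℕ) {k : ℤ} (hk : n < k) : qb n k = 0 := by
  induction n generalizing k with
  | zero => simp [qb, (show k ≠ 0 by omega)]
  | succ n ih => simp [qb, ih (show (n : ℤ) < k by omega), ih (show (n : ℤ) < k - 1 by omega)]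

lemma qb_hasFiniteSupport (n : ℕ) : (qb n).HasFiniteSupport :=
  (Set.finite_Icc 0 (n : ℤ)).subset fun k hk => by
    by_contra h
    rcases not_and_or.mp (Set.mem_Icc.not.mp h) with h | h
    · exact hk (qb_eq_zero_of_neg n (not_le.mp h))
    · exact hk (qb_eq_zero_of_lt n (not_le.mp h))

lemma qb_zero_right (n : ℕ) : qb n 0 = 1 := by
  induction n with
  | zero => simp [qb]
  | succ n ih => simp [qb, ih, qb_eq_zero_of_neg]

lemma qb_succ (n : ℕ) (k : ℤ) : qb (n + 1) k = T k * qb n k + qb n (k - 1) := rfl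

lemma qb_succ' (n : ℕ) (k : ℤ) : qb (n + 1) k = qb n k + T (n + 1 - k) * qb n (k - 1) := by
  induction n generalizing k with
  | zero =>
    rw [qb_succ]
    rcases eq_or_ne k 0 with rfl | h0
    · simp [qb]
    rcases eq_or_ne k 1 with rfl | h1
    · simp [qb]
    · simp [qb, h0, sub_eq_zero, h1]
  | succ n ih =>
    have e1 : (T k * T (n + 1 - k) : ℤ[T;T⁻¹]) = T (n + 1) := by rw [← T_add]; ring_nf
    have e2 : (T (n + 1 - (k - 1)) * T (k - 1) : ℤ[T;T⁻¹]) = T (n + 1) := by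
      rw [← T_add]; ring_nf
    rw [qb_succ]
    push_cast
    linear_combination (norm := ring_nf) T k * ih k + ih (k - 1) - qb_succ n k
      - T (n + 1 - (k - 1)) * qb_succ n (k - 1) + qb n (k - 1) * e1 - qb n (k - 1) * e2

lemma one_sub_T_mul_qb_succ (n : ℕ) (k : ℤ) :
    (1 - T k) * qb (n + 1) k = (1 - T (n + 1)) * qb n (k - 1) := by
  have e : (T k * T (n + 1 - k) : ℤ[T;T⁻¹]) = T (n + 1) := by rw [← T_add]; ring_nf
  linear_combination qb_succ n k - T k * qb_succ' n k - qb n (k - 1) * e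

lemma one_sub_T_sub_mul_qb_succ (n : ℕ) (k : ℤ) :
    (1 - T (n + 1 - k)) * qb (n + 1) k = (1 - T (n + 1)) * qb n k := by
  have e : (T (n + 1 - k) * T k : ℤ[T;T⁻¹]) = T (n + 1) := by rw [← T_add]; ring_nf
  linear_combination qb_succ' n k - T (n + 1 - k) * qb_succ n k - qb n k * e

lemma qb_recurrence (n : ℕ) (hn : 2 ≤ n) (k : ℤ) :
    qb n k - (1 + q - q ^ n) * qb (n - 1) k
      - T (2 * (n : ℤ) - 2 * k) * qb (n - 1) (k - 1)
      + q * (1 - q ^ (n - 1)) * qb (n - 2) k = 0 := by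
  obtain ⟨m, rfl⟩ : ∃ m, n = m + 2 := ⟨n - 2, by omega⟩
  simp only [q, T_pow, show m + 2 - 1 = m + 1 by omega, Nat.add_sub_cancel]
  have h1 := qb_succ' (m + 1) k
  have h2 := qb_succ' m k
  have h3 := one_sub_T_sub_mul_qb_succ m (k - 1)
  push_cast at h1 h3 ⊢
  have e1 : (T 1 * T (m + 1) : ℤ[T;T⁻¹]) = T (m + 2) := by rw [← T_add]; ring_nf
  have e2 : (T (m + 2 - k) ^ 2 : ℤ[T;T⁻¹]) = T (2 * (m + 2) - 2 * k) := by
    rw [sq, ← T_add]; ring_nf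
  have e3 : (T 1 * T (m + 1 - k) : ℤ[T;T⁻¹]) = T (m + 2 - k) := by rw [← T_add]; ring_nf
  have e4 : (T (m + 2 - k) * T (m + 1) : ℤ[T;T⁻¹]) = T (m + 2) * T (m + 1 - k) := by
    rw [← T_add, ← T_add]; ring_nf
  linear_combination (norm := ring_nf) h1 + T (m + 2 - k) * h3 - (T 1 - T (m + 2)) * h2
    - qb m k * e1 - qb m (k - 1) * e3 + qb (m + 1) (k - 1) * e2 - qb m (k - 1) * e4

noncomputable def pentCoeff (j : ℤ) : ℤ[T;T⁻¹] := (-1) ^ j.natAbs * T (j * (3 * j - 1) / 2)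

lemma pentCoeff_neg (j : ℤ) : pentCoeff (-j) = T j * pentCoeff j := by
  rw [pentCoeff, pentCoeff, Int.natAbs_neg,
    show -j * (3 * -j - 1) = j * (3 * j - 1) + j * 2 by ring,
    Int.add_mul_ediv_right _ _ two_ne_zero, T_add]
  ring

lemma pentCoeff_one_sub (j : ℤ) : pentCoeff (1 - j) = -(T (1 - 2 * j) * pentCoeff j) := by
  have hsign : ((-1 : ℤ[T;T⁻¹])) ^ (1 - j).natAbs = -(-1) ^ j.natAbs := by
    rcases Int.even_or_odd j with h | h
    · rw [(Int.natAbs_even.mpr h).neg_one_pow,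
        (Int.natAbs_odd.mpr (Odd.sub_even odd_one h)).neg_one_pow]
    · rw [(Int.natAbs_odd.mpr h).neg_one_pow,
        (Int.natAbs_even.mpr (Odd.sub_odd odd_one h)).neg_one_pow, neg_neg]
  rw [pentCoeff, pentCoeff, hsign,
    show (1 - j) * (3 * (1 - j) - 1) = j * (3 * j - 1) + (1 - 2 * j) * 2 by ring,
    Int.add_mul_ediv_right _ _ two_ne_zero, T_add]
  ring

noncomputable def pentTerm (n : ℕ) (a b s j : ℤ) : ℤ[T;T⁻¹] :=
  pentCoeff j * T (s * j) * qb n (a - j) * qb n (b + j)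

noncomputable def pentSum (n : ℕ) (a b s : ℤ) : ℤ[T;T⁻¹] := ∑ᶠ j, pentTerm n a b s j

@[fun_prop]
lemma pentTerm_hasFiniteSupport (n : ℕ) (a b s : ℤ) : (pentTerm n a b s).HasFiniteSupport :=
  ((qb_hasFiniteSupport n).comp_of_injective (add_right_injective b)).mul_right _

lemma f_eq_pentSum (n : ℕ) (k : ℤ) : f n k = pentSum n k k 0 := by
  simp [f, pentSum, pentTerm, pentCoeff]

lemma pentSum_comm (n : ℕ) (a b s : ℤ) : pentSum n a b s = pentSum n b a (1 - s) := by
  rw [pentSum, ← finsum_comp_equiv (Equiv.neg ℤ)]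
  refine finsum_congr fun j => ?_
  have e : (T j * T (s * -j) : ℤ[T;T⁻¹]) = T ((1 - s) * j) := by rw [← T_add]; ring_nf
  rw [Equiv.neg_apply, pentTerm, pentTerm, pentCoeff_neg, sub_neg_eq_add, ← sub_eq_add_neg]
  linear_combination pentCoeff j * qb n (a + j) * qb n (b - j) * e

lemma pentSum_self_sub_one_neg_one (n : ℕ) (a : ℤ) : pentSum n a (a - 1) (-1) = 0 := by
  have hanti : ∀ j, pentTerm n a (a - 1) (-1) (1 - j) = -pentTerm n a (a - 1) (-1) j := by
    intro j
    have e : (T (1 - 2 * j) * T (-1 * (1 - j)) : ℤ[T;T⁻¹]) = T (-1 * j) := by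
      rw [← T_add]; ring_nf
    rw [pentTerm, pentTerm, pentCoeff_one_sub, show a - (1 - j) = a - 1 + j by ring,
      show a - 1 + (1 - j) = a - j by ring]
    linear_combination -pentCoeff j * qb n (a - 1 + j) * qb n (a - j) * e
  have h : pentSum n a (a - 1) (-1) = -pentSum n a (a - 1) (-1) :=
    calc pentSum n a (a - 1) (-1)
        = ∑ᶠ j, pentTerm n a (a - 1) (-1) (1 - j) := (finsum_comp_equiv (Equiv.subLeft 1)).symm
      _ = ∑ᶠ j, -pentTerm n a (a - 1) (-1) j := finsum_congr hanti
      _ = -pentSum n a (a - 1) (-1) := finsum_neg_distrib _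
  have := charZero_of_injective_ringHom (Polynomial.toLaurent_injective (R := ℤ))
  exact CharZero.eq_neg_self_iff.mp h

lemma pentSum_succ (n : ℕ) (a b s : ℤ) :
    pentSum (n + 1) a b s = T (a + b) * pentSum n a b s + T a * pentSum n a (b - 1) (s - 1)
      + T b * pentSum n (a - 1) b (s + 1) + pentSum n (a - 1) (b - 1) s := by
  have hterm : ∀ j, pentTerm (n + 1) a b s j = T (a + b) * pentTerm n a b s j
      + T a * pentTerm n a (b - 1) (s - 1) j + T b * pentTerm n (a - 1) b (s + 1) j
      + pentTerm n (a - 1) (b - 1) s j := by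
    intro j
    have e1 : (T (s * j) * T (a - j) * T (b + j) : ℤ[T;T⁻¹]) = T (a + b) * T (s * j) := by
      simp only [← T_add]; ring_nf
    have e2 : (T (s * j) * T (a - j) : ℤ[T;T⁻¹]) = T a * T ((s - 1) * j) := by
      simp only [← T_add]; ring_nf
    have e3 : (T (s * j) * T (b + j) : ℤ[T;T⁻¹]) = T b * T ((s + 1) * j) := by
      simp only [← T_add]; ring_nf
    simp only [pentTerm, qb_succ]
    linear_combination (norm := ring_nf) pentCoeff j * qb n (a - j) * qb n (b + j) * e1
      + pentCoeff j * qb n (a - j) * qb n (b + j - 1) * e2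
      + pentCoeff j * qb n (a - j - 1) * qb n (b + j) * e3
  simp only [pentSum, finsum_congr hterm]
  rw [finsum_add_distrib (by fun_prop) (by fun_prop), finsum_add_distrib (by fun_prop)
    (by fun_prop), finsum_add_distrib (by fun_prop) (by fun_prop), ← mul_finsum, ← mul_finsum,
    ← mul_finsum]

lemma pentSum_succ' (n : ℕ) (a b s : ℤ) :
    pentSum (n + 1) a b s = T b * pentSum n a b (s + 1) + pentSum n a (b - 1) s
      + T (n + 1 - a + b) * pentSum n (a - 1) b (s + 2)
      + T (n + 1 - a) * pentSum n (a - 1) (b - 1) (s + 1) := by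
  have hterm : ∀ j, pentTerm (n + 1) a b s j = T b * pentTerm n a b (s + 1) j
      + pentTerm n a (b - 1) s j + T (n + 1 - a + b) * pentTerm n (a - 1) b (s + 2) j
      + T (n + 1 - a) * pentTerm n (a - 1) (b - 1) (s + 1) j := by
    intro j
    have e1 : (T (s * j) * T (b + j) : ℤ[T;T⁻¹]) = T b * T ((s + 1) * j) := by
      simp only [← T_add]; ring_nf
    have e2 : (T (s * j) * T (n + 1 - (a - j)) * T (b + j) : ℤ[T;T⁻¹])
        = T (n + 1 - a + b) * T ((s + 2) * j) := by
      simp only [← T_add]; ring_nf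
    have e3 : (T (s * j) * T (n + 1 - (a - j)) : ℤ[T;T⁻¹])
        = T (n + 1 - a) * T ((s + 1) * j) := by
      simp only [← T_add]; ring_nf
    simp only [pentTerm, qb_succ' n (a - j), qb_succ n (b + j)]
    linear_combination (norm := ring_nf) pentCoeff j * qb n (a - j) * qb n (b + j) * e1
      + pentCoeff j * qb n (a - j - 1) * qb n (b + j) * e2
      + pentCoeff j * qb n (a - j - 1) * qb n (b + j - 1) * e3
  simp only [pentSum, finsum_congr hterm]
  rw [finsum_add_distrib (by fun_prop) (by fun_prop), finsum_add_distrib (by fun_prop)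
    (by fun_prop), finsum_add_distrib (by fun_prop) (by fun_prop), ← mul_finsum, ← mul_finsum,
    ← mul_finsum]

lemma one_sub_T_mul_f_succ (n : ℕ) (k : ℤ) :
    (1 - T k) * f (n + 1) k = (1 - T (n + 1)) * f n (k - 1) := by
  have h1 := pentSum_succ n k k 0
  have h2 := pentSum_succ' n k k 0
  have hS : pentSum n (k - 1) k 1 = pentSum n k (k - 1) 0 := by rw [pentSum_comm]; norm_num
  have hf : pentSum n k k 1 = pentSum n k k 0 := by rw [pentSum_comm]; norm_num
  have hf' : pentSum n (k - 1) (k - 1) 1 = pentSum n (k - 1) (k - 1) 0 := by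
    rw [pentSum_comm]; norm_num
  have h0 := pentSum_self_sub_one_neg_one n k
  have h0' : pentSum n (k - 1) k 2 = 0 := by rw [pentSum_comm]; norm_num [h0]
  have e1 : (T k * T k : ℤ[T;T⁻¹]) = T (k + k) := by rw [← T_add]
  have e2 : (T k * T (n + 1 - k) : ℤ[T;T⁻¹]) = T (n + 1) := by rw [← T_add]; ring_nf
  rw [f_eq_pentSum, f_eq_pentSum]
  -- `h1 - T k * h2` eliminates both `f n k` and the cross sum `pentSum n k (k - 1) 0`.
  linear_combination (norm := ring_nf) h1 - T k * h2 + T k * h0 + T k * hS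
    - T k * T (n + 1) * h0' - pentSum n (k - 1) (k - 1) 1 * e2 - T (n + 1) * hf'
    - T k ^ 2 * hf - pentSum n k k 0 * e1

lemma f_eq_sq (n : ℕ) (k : ℤ) (h : ∀ j ≠ 0, qb n (k - j) * qb n (k + j) = 0) :
    f n k = qb n k ^ 2 := by
  rw [f_eq_pentSum, pentSum, finsum_eq_single _ 0 fun j hj => by simp [pentTerm, mul_assoc, h j hj]]
  simp [pentTerm, pentCoeff, sq]

lemma f_eq_qb (n : ℕ) (k : ℤ) : f n k = qb n k := by
  induction n generalizing k with
  | zero =>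
    rw [f_eq_sq]
    · by_cases hk : k = 0 <;> simp [qb, hk]
    · intro j hj
      simp only [qb, mul_ite, mul_one, mul_zero, ite_eq_right_iff, one_ne_zero, imp_false]
      omega
  | succ n ih =>
    rcases eq_or_ne k 0 with rfl | hk
    · rw [f_eq_sq, qb_zero_right, one_pow]
      intro j hj
      rcases hj.lt_or_gt with h | h
      · rw [zero_add, qb_eq_zero_of_neg _ h, mul_zero]
      · rw [qb_eq_zero_of_neg _ (by omega : 0 - j < 0), zero_mul]
    · refine mul_left_cancel₀ (one_sub_T_ne_zero hk) ?_
      rw [one_sub_T_mul_f_succ, ih, one_sub_T_mul_qb_succ]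

theorem stmt7 (n : ℕ) (hn : 2 ≤ n) (k : ℤ) :
    f n k - (1 + q - q ^ n) * f (n - 1) k
      - T (2 * (n : ℤ) - 2 * k) * f (n - 1) (k - 1)
      + q * (1 - q ^ (n - 1)) * f (n - 2) k = 0 := by
  simp only [f_eq_qb]
  exact qb_recurrence n hn k
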